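/- Let γ : [0,1] → ℝⁿ be continuous with image a simple rectifiable curve Γ (γ need not be injective), let γ̃ be an injective parametrization of Γ, and let 0 = a₀ < a₁ < ⋯ < a_m = 1 be a dissection. Let π be a permutation of {0,…,m} sorting the points γ(aᵢ) by their position along γ̃ (i.e., i < j implies γ̃^{−1}(γ(a_{π(i)})) ≤ γ̃^{−1}(γ(a_{π(j)}))). Then the polygonal curve connecting γ(a_{π(0)}), γ(a_{π(1)}), …, γ(a_{π(m)}) in order has length at most H¹(Γ). -/

import Mathlib

/-!
Choose parameters `sᵢ` of the sorted points along the injective parametrization `γt`; the sorting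
hypothesis makes them monotone. The `i`-th chord is at most the `1`-dimensional Hausdorff measure
of the arc `γt '' [sᵢ, sᵢ₊₁]`, since the distance from one endpoint is a `1`-Lipschitz map sending
this connected arc onto an interval of length the chord. By injectivity, distinct arcs meet in at
most one point, a null set, so their measures add up to at most `μH[1] Γ`.
-/

open Set MeasureTheory ENNReal

theorem Set.InjOn.image_Icc_inter_image_Icc_subset {α β : Type*} [LinearOrder α] {f : α → β}
    {t : Set α} (hf : InjOn f t) {p u v q : α} (hpu : Icc p u ⊆ t) (hvq : Icc v q ⊆ t)
    (huv : u ≤ v) : f '' Icc p u ∩ f '' Icc v q ⊆ {f u} := by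
  rw [← hf.image_inter hpu hvq]
  rintro _ ⟨x, ⟨⟨-, hxu⟩, ⟨hvx, -⟩⟩, rfl⟩
  rw [le_antisymm hxu (huv.trans hvx)]
  rfl

section

variable {X : Type*} [MetricSpace X] [MeasurableSpace X] [BorelSpace X]

theorem IsPreconnected.edist_le_hausdorffMeasure_one {s : Set X} (hs : IsPreconnected s)
    {x y : X} (hx : x ∈ s) (hy : y ∈ s) : edist x y ≤ μH[1] s := by
  have hlip : LipschitzWith 1 (dist x) := LipschitzWith.dist_right x
  have hIcc : Icc 0 (dist x y) ⊆ dist x '' s :=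
    (hs.image _ hlip.continuous.continuousOn).Icc_subset ⟨x, hx, dist_self x⟩ ⟨y, hy, rfl⟩
  calc edist x y = volume (Icc 0 (dist x y)) := by rw [Real.volume_Icc, sub_zero, edist_dist]
    _ ≤ μH[1] (dist x '' s) := by rw [← hausdorffMeasure_real]; exact measure_mono hIcc
    _ ≤ μH[1] s := by simpa using hlip.hausdorffMeasure_image_le zero_le_one s

theorem edist_le_hausdorffMeasure_one_image_Icc {f : ℝ → X} {s t : ℝ} (hst : s ≤ t)
    (hf : ContinuousOn f (Icc s t)) : edist (f s) (f t) ≤ μH[1] (f '' Icc s t) :=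
  (isPreconnected_Icc.image f hf).edist_le_hausdorffMeasure_one
    (mem_image_of_mem f (left_mem_Icc.2 hst)) (mem_image_of_mem f (right_mem_Icc.2 hst))

theorem sum_hausdorffMeasure_image_Icc_le {d : ℝ} (hd : 0 < d) {m : ℕ} {f : ℝ → X} {a b : ℝ}
    {s : Fin (m + 1) → ℝ} (hs : Monotone s) (hsab : ∀ i, s i ∈ Icc a b)
    (hf : ContinuousOn f (Icc a b)) (hinj : InjOn f (Icc a b)) :
    ∑ i : Fin m, μH[d] (f '' Icc (s i.castSucc) (s i.succ)) ≤ μH[d] (f '' Icc a b) := by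
  have : NullSingletonClass (μH[d] : Measure X) := Measure.nullSingletonClass_hausdorff X hd
  set A : Fin m → Set X := fun i => f '' Icc (s i.castSucc) (s i.succ)
  have hsub : ∀ i : Fin m, Icc (s i.castSucc) (s i.succ) ⊆ Icc a b := fun i =>
    Icc_subset_Icc (hsab i.castSucc).1 (hsab i.succ).2
  have hmeas : ∀ i, NullMeasurableSet (A i) μH[d] := fun i =>
    (isCompact_Icc.image_of_continuousOn (hf.mono (hsub i))).measurableSet.nullMeasurableSet
  have hdisj_of_lt : ∀ i j : Fin m, i < j → AEDisjoint μH[d] (A i) (A j) := fun i j hij =>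
    measure_mono_null (hinj.image_Icc_inter_image_Icc_subset (hsub i) (hsub j)
      (hs (Fin.succ_le_castSucc_iff.2 hij))) (measure_singleton _)
  have hdisj : Pairwise (Function.onFun (AEDisjoint μH[d]) A) := fun i j hij =>
    hij.lt_or_gt.elim (hdisj_of_lt i j) fun hji => (hdisj_of_lt j i hji).symm
  calc ∑ i, μH[d] (A i) = μH[d] (⋃ i, A i) := by
        rw [measure_iUnion₀ hdisj hmeas, tsum_fintype]
    _ ≤ μH[d] (f '' Icc a b) := measure_mono (iUnion_subset fun i => image_mono (hsub i))

theorem sum_edist_le_hausdorffMeasure_one_image_Icc {m : ℕ} {f : ℝ → X} {a b : ℝ}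
    {s : Fin (m + 1) → ℝ} (hs : Monotone s) (hsab : ∀ i, s i ∈ Icc a b)
    (hf : ContinuousOn f (Icc a b)) (hinj : InjOn f (Icc a b)) :
    ∑ i : Fin m, edist (f (s i.castSucc)) (f (s i.succ)) ≤ μH[1] (f '' Icc a b) :=
  (Finset.sum_le_sum fun i _ => edist_le_hausdorffMeasure_one_image_Icc
      (hs (Fin.castSucc_le_succ i))
      (hf.mono (Icc_subset_Icc (hsab i.castSucc).1 (hsab i.succ).2))).trans
    (sum_hausdorffMeasure_image_Icc_le one_pos hs hsab hf hinj)

end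

theorem sorted_chord_sum_le_length_general {n : ℕ} {m : ℕ}
    (γ : ℝ → EuclideanSpace ℝ (Fin n))
    (Γ : Set (EuclideanSpace ℝ (Fin n))) (hΓ : Γ = γ '' Icc 0 1)
    (γt : ℝ → EuclideanSpace ℝ (Fin n)) (hγtc : ContinuousOn γt (Icc 0 1))
    (hγti : InjOn γt (Icc 0 1)) (hγtim : γt '' Icc 0 1 = Γ)
    (a : Fin (m + 1) → ℝ) (hmono : StrictMono a)
    (h0 : a 0 = 0) (h1 : a (Fin.last m) = 1)
    (π : Equiv.Perm (Fin (m + 1)))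
    (hsort : ∀ i j : Fin (m + 1), i < j →
      ∀ s ∈ Icc (0 : ℝ) 1, ∀ t ∈ Icc (0 : ℝ) 1,
        γt s = γ (a (π i)) → γt t = γ (a (π j)) → s ≤ t) :
    ENNReal.ofReal (∑ i : Fin m, dist (γ (a (π i.castSucc))) (γ (a (π i.succ))))
      ≤ μH[1] Γ := by
  have hmem : ∀ i, γ (a (π i)) ∈ γt '' Icc 0 1 := fun i => by
    rw [hγtim, hΓ]
    refine mem_image_of_mem γ ⟨?_, ?_⟩
    · exact h0 ▸ hmono.monotone (Fin.zero_le _)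
    · exact h1 ▸ hmono.monotone (Fin.le_last _)
  choose s hs01 hγts using hmem
  have hs : Monotone s := fun i j hij => hij.eq_or_lt.elim (fun h => h ▸ le_rfl)
    fun h => hsort i j h _ (hs01 i) _ (hs01 j) (hγts i) (hγts j)
  simp_rw [← hγts, ← hγtim]
  rw [ofReal_sum_of_nonneg fun i _ => dist_nonneg]
  simp_rw [← edist_dist]
  exact sum_edist_le_hausdorffMeasure_one_image_Icc hs hs01 hγtc hγti

theorem sorted_chord_sum_le_length {n : ℕ} {m : ℕ}
    (γ : ℝ → EuclideanSpace ℝ (Fin n)) (hγ : ContinuousOn γ (Icc 0 1))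
    (Γ : Set (EuclideanSpace ℝ (Fin n))) (hΓ : Γ = γ '' Icc 0 1)
    (γt : ℝ → EuclideanSpace ℝ (Fin n)) (hγtc : ContinuousOn γt (Icc 0 1))
    (hγti : InjOn γt (Icc 0 1)) (hγtim : γt '' Icc 0 1 = Γ)
    (hrect : μH[1] Γ < ⊤)
    (a : Fin (m + 1) → ℝ) (hmono : StrictMono a)
    (h0 : a 0 = 0) (h1 : a (Fin.last m) = 1)
    (π : Equiv.Perm (Fin (m + 1)))
    (hsort : ∀ i j : Fin (m + 1), i < j →
      ∀ s ∈ Icc (0 : ℝ) 1, ∀ t ∈ Icc (0 : ℝ) 1,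
        γt s = γ (a (π i)) → γt t = γ (a (π j)) → s ≤ t) :
    ENNReal.ofReal (∑ i : Fin m, dist (γ (a (π i.castSucc))) (γ (a (π i.succ))))
      ≤ μH[1] Γ :=
  sorted_chord_sum_le_length_general γ Γ hΓ γt hγtc hγti hγtim a hmono h0 h1 π hsort
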